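/- arXiv:2410.06582 — 2 statements merged into one kernel-verified Lean document; each statement's English description precedes it below -/
import Mathlib

section
/- With the same notation and nonvanishing assumptions as in the finite geometric progression formula, and additionally z ≠ 0, for every n ≥ 0 one has (1 - w z^{-1}) · ∑_{k=0}^{n} (1 - α_{k+1} β_{k+1}) · [z·(z;α)^k / (z|β)^{k+1}] · [(w|β)^k / (w;α)^{k+1}] = 1 - [(z;α)^{n+1} / (z|β)^{n+1}] · [(w|β)^{n+1} / (w;α)^{n+1}]. -/
/-!
Write `ρ k = (z;α)^k / (z|β)^k · (w|β)^k / (w;α)^k`. Passing from `k` to `k + 1` multiplies `ρ k`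
by `(1 - z α_{k+1}) (w - β_{k+1}) / ((z - β_{k+1}) (1 - w α_{k+1}))`, and the identity
`(z - b) (1 - w a) - (1 - z a) (w - b) = (z - w) (1 - a b)` shows that the `k`-th summand, multiplied
by `1 - w z⁻¹`, is `ρ k - ρ (k + 1)`. The sum telescopes to `ρ 0 - ρ (n + 1) = 1 - ρ (n + 1)`.
-/

open Finset

/-- The shifted power `(z|γ)^k = ∏_{j=1}^k (z - γ_j)` for `k ≥ 0`. -/
noncomputable def barPow {K : Type*} [Field K] (z : K) (γ : ℕ → K) (k : ℕ) : K :=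
  ∏ j ∈ range k, (z - γ (j + 1))

/-- The shifted power `(z;γ)^k = ∏_{j=1}^k (1 - z γ_j)` for `k ≥ 0`. -/
noncomputable def semiPow {K : Type*} [Field K] (z : K) (γ : ℕ → K) (k : ℕ) : K :=
  ∏ j ∈ range k, (1 - z * γ (j + 1))

section ShiftedPowers

variable {K : Type*} [Field K]

theorem barPow_succ (z : K) (γ : ℕ → K) (k : ℕ) :
    barPow z γ (k + 1) = barPow z γ k * (z - γ (k + 1)) :=
  prod_range_succ _ k

theorem semiPow_succ (z : K) (γ : ℕ → K) (k : ℕ) :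
    semiPow z γ (k + 1) = semiPow z γ k * (1 - z * γ (k + 1)) :=
  prod_range_succ _ k

theorem barPow_ne_zero {z : K} {γ : ℕ → K} (h : ∀ j, z - γ j ≠ 0) (k : ℕ) :
    barPow z γ k ≠ 0 :=
  prod_ne_zero_iff.2 fun _ _ => h _

theorem semiPow_ne_zero {z : K} {γ : ℕ → K} (h : ∀ j, 1 - z * γ j ≠ 0) (k : ℕ) :
    semiPow z γ k ≠ 0 :=
  prod_ne_zero_iff.2 fun _ _ => h _

noncomputable def shiftedRatio (α β : ℕ → K) (z w : K) (k : ℕ) : K :=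
  semiPow z α k / barPow z β k * (barPow w β k / semiPow w α k)

theorem shiftedRatio_zero (α β : ℕ → K) (z w : K) : shiftedRatio α β z w 0 = 1 := by
  simp [shiftedRatio, barPow, semiPow]

theorem one_sub_mul_inv_mul_eq_shiftedRatio_sub {α β : ℕ → K} {z w : K} (hz : z ≠ 0)
    (hzβ : ∀ j, z - β j ≠ 0) (hwα : ∀ j, 1 - w * α j ≠ 0) (k : ℕ) :
    (1 - w * z⁻¹) * ((1 - α (k + 1) * β (k + 1)) * (z * semiPow z α k / barPow z β (k + 1)) *
        (barPow w β k / semiPow w α (k + 1))) =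
      shiftedRatio α β z w k - shiftedRatio α β z w (k + 1) := by
  have hzβk := barPow_ne_zero hzβ k
  have hwαk := semiPow_ne_zero hwα k
  have hzβ' := hzβ (k + 1)
  have hwα' := hwα (k + 1)
  rw [shiftedRatio, shiftedRatio, barPow_succ z β k, semiPow_succ z α k, barPow_succ w β k,
    semiPow_succ w α k]
  field_simp
  ring

end ShiftedPowers

/-- Variant of the finite geometric progression formula for shifted powers,
obtained by the substitution `z ↦ z⁻¹`. -/
theorem stmt_2 {K : Type*} [Field K] (α β : ℕ → K) (z w : K) (hz : z ≠ 0)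
    (hzβ : ∀ j, z - β j ≠ 0) (hwα : ∀ j, 1 - w * α j ≠ 0) (n : ℕ) :
    (1 - w * z⁻¹) * ∑ k ∈ range (n + 1),
        (1 - α (k + 1) * β (k + 1)) * (z * semiPow z α k / barPow z β (k + 1)) *
          (barPow w β k / semiPow w α (k + 1)) =
      1 - (semiPow z α (n + 1) / barPow z β (n + 1)) *
        (barPow w β (n + 1) / semiPow w α (n + 1)) := by
  rw [mul_sum, sum_congr rfl fun k _ => one_sub_mul_inv_mul_eq_shiftedRatio_sub hz hzβ hwα k,
    sum_range_sub', shiftedRatio_zero]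
  rfl
end

section
/- Let K be a field, α, β : ℤ → K, and z, ζ ∈ K with all shifted powers defined and nonzero and with (ιβ), (ια) defined by (ιγ)_i = γ_{1-i}. Then for every n ≥ 1: (ζ - z) · ∑_{j=1-n}^{0} (1 - α_j β_j) · [(z;α)^{j-1} (ζ|β)^{j-1}] / [(z|β)^{j} (ζ;α)^{j}] = 1 - [(z|ιβ)^{n} (ζ;ια)^{n}] / [(z;ια)^{n} (ζ|ιβ)^{n}]. -/
/-- Doubly-indexed shifted power `(z;α)^k`: `(1-zα_1)⋯(1-zα_k)` for `k > 0`, `1` for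
`k = 0`, and `[(1-zα_0)(1-zα_{-1})⋯(1-zα_{k+1})]⁻¹` for `k < 0`. -/
noncomputable def cpow {K : Type*} [Field K] (z : K) (α : ℤ → K) (k : ℤ) : K :=
  if 0 ≤ k then ∏ j ∈ Finset.range k.toNat, (1 - z * α ((j : ℤ) + 1))
  else (∏ j ∈ Finset.range (-k).toNat, (1 - z * α (-(j : ℤ))))⁻¹

/-- Doubly-indexed shifted power `(z|β)^k`: `(z-β_1)⋯(z-β_k)` for `k > 0`, `1` for
`k = 0`, and `[(z-β_0)(z-β_{-1})⋯(z-β_{k+1})]⁻¹` for `k < 0`. -/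
noncomputable def ppow {K : Type*} [Field K] (z : K) (β : ℤ → K) (k : ℤ) : K :=
  if 0 ≤ k then ∏ j ∈ Finset.range k.toNat, (z - β ((j : ℤ) + 1))
  else (∏ j ∈ Finset.range (-k).toNat, (z - β (-(j : ℤ))))⁻¹

/-!
On nonpositive indices `(z;α)^k` and `(z|β)^k` are reciprocals of products, so passing from
`k` to `k - 1` divides by one more factor. Hence, writing `R k` for
`(z;α)^k (ζ|β)^k / ((z|β)^k (ζ;α)^k)`, the identity
`(ζ - z)(1 - α_k β_k) = (1 - zα_k)(ζ - β_k) - (z - β_k)(1 - ζα_k)` makes the `k`-th summand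
equal to `R k - R (k - 1)`. The sum telescopes to `R 0 - R (-n) = 1 - R (-n)`, and the
involution `ι` turns the positive-index powers on the right into the reciprocals of the
powers at `-n`, so that the right-hand side is `1 - R (-n)` as well.
-/

open Finset

theorem Finset.sum_Ioc_sub_pred {M : Type*} [AddCommGroup M] (f : ℤ → M) {a b : ℤ}
    (hab : a ≤ b) : ∑ j ∈ Ioc a b, (f j - f (j - 1)) = f b - f a := by
  induction b, hab using Int.leInduction with
  | base => simp
  | succ b hab ih =>
    rw [← insert_Ioc_right_eq_Ioc_add_one hab, sum_insert (by simp), ih, add_sub_cancel_right]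
    abel

section ShiftedPowers

variable {K : Type*} [Field K]

theorem cpow_neg_natCast (z : K) (α : ℤ → K) (m : ℕ) :
    cpow z α (-m) = (∏ i ∈ range m, (1 - z * α (-i)))⁻¹ := by
  simp +contextual [cpow]

theorem ppow_neg_natCast (z : K) (β : ℤ → K) (m : ℕ) :
    ppow z β (-m) = (∏ i ∈ range m, (z - β (-i)))⁻¹ := by
  simp +contextual [ppow]

theorem cpow_sub_one_of_nonpos (z : K) (α : ℤ → K) {k : ℤ} (hk : k ≤ 0) :
    cpow z α (k - 1) = cpow z α k * (1 - z * α k)⁻¹ := by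
  obtain ⟨m, rfl⟩ := Int.exists_eq_neg_ofNat hk
  rw [show -(m : ℤ) - 1 = -((m + 1 : ℕ) : ℤ) by omega, cpow_neg_natCast,
    cpow_neg_natCast, prod_range_succ, mul_inv]

theorem ppow_sub_one_of_nonpos (z : K) (β : ℤ → K) {k : ℤ} (hk : k ≤ 0) :
    ppow z β (k - 1) = ppow z β k * (z - β k)⁻¹ := by
  obtain ⟨m, rfl⟩ := Int.exists_eq_neg_ofNat hk
  rw [show -(m : ℤ) - 1 = -((m + 1 : ℕ) : ℤ) by omega, ppow_neg_natCast,
    ppow_neg_natCast, prod_range_succ, mul_inv]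

theorem cpow_comp_one_sub_natCast (z : K) (α : ℤ → K) (n : ℕ) :
    cpow z (fun i => α (1 - i)) n = (cpow z α (-n))⁻¹ := by
  rw [cpow_neg_natCast, inv_inv, cpow, if_pos (by positivity), Int.toNat_natCast]
  exact prod_congr rfl fun i _ => by rw [sub_add_cancel_right]

theorem ppow_comp_one_sub_natCast (z : K) (β : ℤ → K) (n : ℕ) :
    ppow z (fun i => β (1 - i)) n = (ppow z β (-n))⁻¹ := by
  rw [ppow_neg_natCast, inv_inv, ppow, if_pos (by positivity), Int.toNat_natCast]
  exact prod_congr rfl fun i _ => by rw [sub_add_cancel_right]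

noncomputable def shiftedPowRatio (α β : ℤ → K) (z ζ : K) (k : ℤ) : K :=
  cpow z α k * ppow ζ β k / (ppow z β k * cpow ζ α k)

theorem shiftedPowRatio_zero (α β : ℤ → K) (z ζ : K) : shiftedPowRatio α β z ζ 0 = 1 := by
  simp [shiftedPowRatio, cpow, ppow]

theorem shiftedPowRatio_neg_natCast (α β : ℤ → K) (z ζ : K) (n : ℕ) :
    ppow z (fun i => β (1 - i)) n * cpow ζ (fun i => α (1 - i)) n /
        (cpow z (fun i => α (1 - i)) n * ppow ζ (fun i => β (1 - i)) n) =
      shiftedPowRatio α β z ζ (-n) := by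
  rw [shiftedPowRatio, cpow_comp_one_sub_natCast, cpow_comp_one_sub_natCast,
    ppow_comp_one_sub_natCast, ppow_comp_one_sub_natCast, div_eq_mul_inv, mul_inv, inv_inv,
    inv_inv]
  ring

theorem sub_mul_summand_eq_shiftedPowRatio_sub (α β : ℤ → K) (z ζ : K) {k : ℤ} (hk : k ≤ 0)
    (hzα : 1 - z * α k ≠ 0) (hζβ : ζ - β k ≠ 0) :
    (ζ - z) * ((1 - α k * β k) * (cpow z α (k - 1) * ppow ζ β (k - 1)) /
        (ppow z β k * cpow ζ α k)) =
      shiftedPowRatio α β z ζ k - shiftedPowRatio α β z ζ (k - 1) := by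
  have hfactor : (ζ - z) * (1 - α k * β k) * ((1 - z * α k)⁻¹ * (ζ - β k)⁻¹) =
      1 - (z - β k) * (1 - ζ * α k) * ((1 - z * α k)⁻¹ * (ζ - β k)⁻¹) := by
    field_simp
    ring
  simp only [shiftedPowRatio, cpow_sub_one_of_nonpos _ _ hk, ppow_sub_one_of_nonpos _ _ hk,
    div_eq_mul_inv, mul_inv, inv_inv]
  linear_combination
    cpow z α k * ppow ζ β k * (ppow z β k)⁻¹ * (cpow ζ α k)⁻¹ * hfactor

end ShiftedPowers

theorem stmt_15_general {K : Type*} [Field K] (α β : ℤ → K) (z ζ : K)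
    (h2 : ∀ j, 1 - z * α j ≠ 0)
    (h3 : ∀ j, ζ - β j ≠ 0) (n : ℕ) :
    (ζ - z) * ∑ j ∈ Finset.Icc (1 - (n : ℤ)) 0,
        (1 - α j * β j) * (cpow z α (j - 1) * ppow ζ β (j - 1)) /
          (ppow z β j * cpow ζ α j) =
      1 - ppow z (fun i => β (1 - i)) (n : ℤ) * cpow ζ (fun i => α (1 - i)) (n : ℤ) /
        (cpow z (fun i => α (1 - i)) (n : ℤ) * ppow ζ (fun i => β (1 - i)) (n : ℤ)) := by
  rw [show 1 - (n : ℤ) = -n + 1 by ring, Icc_add_one_left_eq_Ioc, mul_sum,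
    sum_congr rfl fun j hj => sub_mul_summand_eq_shiftedPowRatio_sub α β z ζ
      (mem_Ioc.1 hj).2 (h2 j) (h3 j),
    sum_Ioc_sub_pred _ (by omega), shiftedPowRatio_zero, shiftedPowRatio_neg_natCast]

/-- The negative-index telescoping identity:
`(ζ - z) ∑_{j=1-n}^{0} (1-α_jβ_j) (z;α)^{j-1}(ζ|β)^{j-1}/[(z|β)^j (ζ;α)^j]
  = 1 - (z|ιβ)^n (ζ;ια)^n / [(z;ια)^n (ζ|ιβ)^n]`, where `(ιγ)_i = γ_{1-i}`. -/
theorem stmt_15 {K : Type*} [Field K] (α β : ℤ → K) (z ζ : K)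
    (h1 : ∀ j, z - β j ≠ 0) (h2 : ∀ j, 1 - z * α j ≠ 0)
    (h3 : ∀ j, ζ - β j ≠ 0) (h4 : ∀ j, 1 - ζ * α j ≠ 0) (n : ℕ) (hn : 1 ≤ n) :
    (ζ - z) * ∑ j ∈ Finset.Icc (1 - (n : ℤ)) 0,
        (1 - α j * β j) * (cpow z α (j - 1) * ppow ζ β (j - 1)) /
          (ppow z β j * cpow ζ α j) =
      1 - ppow z (fun i => β (1 - i)) (n : ℤ) * cpow ζ (fun i => α (1 - i)) (n : ℤ) /
        (cpow z (fun i => α (1 - i)) (n : ℤ) * ppow ζ (fun i => β (1 - i)) (n : ℤ)) :=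
  stmt_15_general α β z ζ h2 h3 n
end
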